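/- arXiv:2106.07450 — 2 statements merged into one kernel-verified Lean document; each statement's English description precedes it below -/
import Mathlib

section
/- Let U₀ = {w ∈ ℂ : |w| < 1/2, Re w > 0} with hyperbolic density ρ_{U₀}, obtained by pulling back the density 1/Re(·) on ℍ₊ under the conformal bijection ψ(w) = (1/i)((2w−i)/(2w+i))². Then for every w = x + iy ∈ U₀ one has the identity ρ_{U₀}(w)/(1/x) = (1 + x²/(1/4 − y² − x²)) · (1 + x²/(1/2 + y)²)^{1/2} · (1 + x²/(1/2 − y)²)^{1/2}. In particular, for w ∈ 𝔻_{1/4} ∩ ℍ₊ the ratio of the hyperbolic density of U₀ to that of ℍ₊ at w equals 1 + O(x²) as x → 0, uniformly in y. -/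
/-!
With `q = (w - i/2)/(w + i/2)` one has `ψ = -i q²`, `ψ' = 2 (w - i/2)/(w + i/2)³` and
`Re ψ(w) = 2 Re w (1/4 - |w|²)/|w + i/2|⁴`, so that
`ρ_{U₀}(w) · Re w = |w - i/2| |w + i/2| / (1/4 - |w|²) = |w² + 1/4| / (1/4 - |w|²)`.
Factoring `1/2 ± y` out of the two distances gives the product formula. For the `O(x²)` bound,
`z = w² + 1/4` has `Re z - (1/4 - |w|²) = 2x²` and `|z| - Re z ≤ (Im z)²/(2 Re z) = O(x²y²)`.
-/

/-- The map `ψ(w) = (1/i)·((2w − i)/(2w + i))²`. -/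
noncomputable def psiMap (w : ℂ) : ℂ :=
  (1 / Complex.I) * (((2 * w - Complex.I) / (2 * w + Complex.I)) ^ 2)

/-- The half-disk `U₀ = {w : |w| < 1/2, Re w > 0}`. -/
def halfDiskU0 : Set ℂ := {w : ℂ | ‖w‖ < 1 / 2 ∧ 0 < w.re}

/-- The hyperbolic density of `U₀`, pulled back from the density `1/Re` on the
right half-plane under the conformal bijection `ψ`. -/
noncomputable def rhoU0 (w : ℂ) : ℝ := ((psiMap w).re)⁻¹ * ‖deriv psiMap w‖

open Complex

lemma Complex.sq_norm_eq_re_sq_add_im_sq (z : ℂ) : ‖z‖ ^ 2 = z.re ^ 2 + z.im ^ 2 := by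
  rw [Complex.sq_norm, normSq_apply]; ring

lemma psiMap_eq (w : ℂ) : psiMap w = -I * ((w - I / 2) / (w + I / 2)) ^ 2 := by
  have h : (2 * w - I) / (2 * w + I) = (w - I / 2) / (w + I / 2) := by
    rw [show 2 * w - I = 2 * (w - I / 2) by ring, show 2 * w + I = 2 * (w + I / 2) by ring,
      mul_div_mul_left _ _ two_ne_zero]
  rw [psiMap, h, one_div, inv_I]

lemma hasDerivAt_psiMap {w : ℂ} (hw : w + I / 2 ≠ 0) :
    HasDerivAt psiMap (2 * (w - I / 2) / (w + I / 2) ^ 3) w := by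
  have hq : HasDerivAt (fun z => (z - I / 2) / (z + I / 2)) (I / (w + I / 2) ^ 2) w :=
    (((hasDerivAt_id w).sub_const (I / 2)).div ((hasDerivAt_id w).add_const (I / 2)) hw).congr_deriv
      (by simp only [id]; ring)
  rw [show psiMap = _ from funext psiMap_eq]
  refine ((hq.pow 2).const_mul (-I)).congr_deriv ?_
  simp only [Nat.cast_ofNat, Nat.add_one_sub_one, pow_one]
  generalize w + I / 2 = d at hw ⊢
  field_simp
  linear_combination (-2 * (w - I / 2)) * I_sq

lemma re_psiMap (w : ℂ) :
    (psiMap w).re = 2 * w.re * (1 / 4 - ‖w‖ ^ 2) / ‖w + I / 2‖ ^ 4 := by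
  have hden : normSq ((w + I / 2) ^ 2) = ‖w + I / 2‖ ^ 4 := by
    rw [map_pow, normSq_eq_norm_sq]; ring
  have hnum : ((w - I / 2) ^ 2).im * ((w + I / 2) ^ 2).re
      - ((w - I / 2) ^ 2).re * ((w + I / 2) ^ 2).im = 2 * w.re * (1 / 4 - ‖w‖ ^ 2) := by
    rw [← normSq_eq_norm_sq, normSq_apply]
    simp only [pow_two, mul_re, mul_im, add_re, add_im, sub_re, sub_im, I_re, I_im, div_ofNat_re,
      div_ofNat_im]
    ring
  rw [psiMap_eq, div_pow, neg_mul, neg_re, mul_re, I_re, I_im, div_im, ← sub_div, hden, hnum]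
  ring

lemma rhoU0_mul_re {w : ℂ} (hw : w.re ≠ 0) :
    rhoU0 w * w.re = ‖w - I / 2‖ * ‖w + I / 2‖ / (1 / 4 - ‖w‖ ^ 2) := by
  have hne : w + I / 2 ≠ 0 := fun h => hw (by simpa using congrArg re h)
  rw [rhoU0, (hasDerivAt_psiMap hne).deriv, re_psiMap, norm_div, norm_mul, norm_pow,
    Complex.norm_two, inv_div]
  field_simp

lemma norm_sub_half_I_mul_norm_add_half_I (w : ℂ) :
    ‖w - I / 2‖ * ‖w + I / 2‖ = ‖w ^ 2 + 1 / 4‖ := by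
  rw [← norm_mul]
  congr 1
  linear_combination (-1 / 4 : ℂ) * I_sq

lemma norm_add_half_I (w : ℂ) : ‖w + I / 2‖ = √(w.re ^ 2 + (1 / 2 + w.im) ^ 2) := by
  rw [norm_def, normSq_apply]
  congr 1
  simp only [add_re, add_im, div_ofNat_re, div_ofNat_im, I_re, I_im]
  ring

lemma norm_sub_half_I (w : ℂ) : ‖w - I / 2‖ = √(w.re ^ 2 + (1 / 2 - w.im) ^ 2) := by
  rw [norm_def, normSq_apply]
  congr 1
  simp only [sub_re, sub_im, div_ofNat_re, div_ofNat_im, I_re, I_im]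
  ring

lemma Real.sqrt_sq_add_sq_eq_mul_sqrt {a : ℝ} (b : ℝ) (ha : 0 < a) :
    √(b ^ 2 + a ^ 2) = a * √(1 + b ^ 2 / a ^ 2) := by
  rw [← Real.sqrt_sq ha.le, ← Real.sqrt_mul (sq_nonneg a), Real.sqrt_sq ha.le]
  congr 1
  field_simp
  ring

lemma rhoU0_mul_re_eq {w : ℂ} (hw : w ∈ halfDiskU0) :
    rhoU0 w * w.re =
      (1 + w.re ^ 2 / (1 / 4 - w.im ^ 2 - w.re ^ 2)) *
        √(1 + w.re ^ 2 / (1 / 2 + w.im) ^ 2) * √(1 + w.re ^ 2 / (1 / 2 - w.im) ^ 2) := by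
  obtain ⟨hnorm, hre⟩ := hw
  have hD_eq : 1 / 4 - ‖w‖ ^ 2 = 1 / 4 - w.im ^ 2 - w.re ^ 2 := by
    rw [sq_norm_eq_re_sq_add_im_sq]; ring
  have him : |w.im| < 1 / 2 := (abs_im_le_norm w).trans_lt hnorm
  have hD : 0 < 1 / 4 - w.im ^ 2 - w.re ^ 2 := by
    rw [← hD_eq]; nlinarith [norm_nonneg w]
  have hplus : 0 < 1 / 2 + w.im := by linarith [neg_abs_le w.im]
  have hminus : 0 < 1 / 2 - w.im := by linarith [le_abs_self w.im]
  rw [rhoU0_mul_re hre.ne', norm_sub_half_I, norm_add_half_I,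
    Real.sqrt_sq_add_sq_eq_mul_sqrt _ hplus, Real.sqrt_sq_add_sq_eq_mul_sqrt _ hminus, hD_eq,
    one_add_div hD.ne']
  field_simp
  ring

lemma Complex.norm_le_re_add_sq_im_div {z : ℂ} (hz : 0 < z.re) :
    ‖z‖ ≤ z.re + z.im ^ 2 / (2 * z.re) := by
  have hcross : 2 * z.re * (z.im ^ 2 / (2 * z.re)) = z.im ^ 2 := by field_simp
  rw [← sq_le_sq₀ (norm_nonneg z) (by positivity), sq_norm_eq_re_sq_add_im_sq]
  nlinarith [sq_nonneg (z.im ^ 2 / (2 * z.re))]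

lemma abs_rhoU0_mul_re_sub_one_le {w : ℂ} (hw : ‖w‖ < 1 / 4) (hre : 0 < w.re) :
    |rhoU0 w * w.re - 1| ≤ 128 / 9 * w.re ^ 2 := by
  set z := w ^ 2 + 1 / 4 with hz
  have hz_re : z.re = 1 / 4 + w.re ^ 2 - w.im ^ 2 := by
    simp only [hz, pow_two, add_re, mul_re, div_ofNat_re, one_re]; ring
  have hz_im : z.im = 2 * w.re * w.im := by
    simp only [hz, pow_two, add_im, mul_im, div_ofNat_im, one_im]; ring
  have hsq : ‖w‖ ^ 2 < 1 / 16 := by nlinarith [norm_nonneg w]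
  have him : w.im ^ 2 < 1 / 16 := by nlinarith [sq_norm_eq_re_sq_add_im_sq w, sq_nonneg w.re]
  have hz_re_pos : 3 / 16 < z.re := by nlinarith
  have hexcess : ‖z‖ - z.re ≤ 2 / 3 * w.re ^ 2 := by
    have := Complex.norm_le_re_add_sq_im_div (by linarith : 0 < z.re)
    have hbound : z.im ^ 2 / (2 * z.re) ≤ 2 / 3 * w.re ^ 2 := by
      rw [div_le_iff₀ (by linarith), hz_im]
      nlinarith [sq_nonneg w.re, mul_nonneg (sq_nonneg w.re) (sub_nonneg.mpr him.le)]
    linarith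
  have hratio : rhoU0 w * w.re - 1 = (‖z‖ - z.re + 2 * w.re ^ 2) / (1 / 4 - ‖w‖ ^ 2) := by
    rw [rhoU0_mul_re hre.ne', norm_sub_half_I_mul_norm_add_half_I, ← hz,
      div_sub_one (by linarith), hz_re, sq_norm_eq_re_sq_add_im_sq]
    ring
  rw [hratio, abs_of_nonneg (div_nonneg (by linarith [re_le_norm z]) (by linarith)),
    div_le_iff₀ (by linarith)]
  nlinarith [sq_nonneg w.re]

/-- For `w = x + iy ∈ U₀`, the ratio of the hyperbolic density of `U₀` to the
density `1/x` of the half-plane equals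
`(1 + x²/(1/4 − y² − x²))·(1 + x²/(1/2+y)²)^{1/2}·(1 + x²/(1/2−y)²)^{1/2}`;
in particular, on `𝔻_{1/4} ∩ ℍ₊` this ratio is `1 + O(x²)`, uniformly in `y`. -/
theorem rhoU0_identity :
    (∀ w ∈ halfDiskU0, rhoU0 w * w.re =
        (1 + w.re ^ 2 / (1 / 4 - w.im ^ 2 - w.re ^ 2)) *
          Real.sqrt (1 + w.re ^ 2 / (1 / 2 + w.im) ^ 2) *
          Real.sqrt (1 + w.re ^ 2 / (1 / 2 - w.im) ^ 2)) ∧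
    ∃ C : ℝ, 0 < C ∧ ∀ w : ℂ, ‖w‖ < 1 / 4 → 0 < w.re →
      |rhoU0 w * w.re - 1| ≤ C * w.re ^ 2 :=
  ⟨fun _ hw => rhoU0_mul_re_eq hw, 128 / 9, by norm_num,
    fun _ hw hre => abs_rhoU0_mul_re_sub_one_le hw hre⟩
end

section
/- For every β ∈ (0, π/2), the inequality (π − β) · sin(πβ/(π − β)) < π · sin(β) holds. Equivalently, the constant μ(β) = ((π − β) sin(πβ/(π − β)))/(π sin β) satisfies 0 < μ(β) < 1. -/
open Real

/-!
Put `t = πβ/(π − β)`, so that `π − β = πβ/t` and `β < t < π` for `β ∈ (0, π/2)`. Strict concavity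
of `sin` on `[0, π]` with `sin 0 = 0` makes `sin x / x` strictly decreasing on `(0, π]`, hence
`(π − β) sin t = πβ · sin t / t < πβ · sin β / β = π sin β`.
-/

theorem Real.strictAntiOn_sin_div_self : StrictAntiOn (fun x => sin x / x) (Set.Ioc 0 π) := by
  intro x hx y hy hxy
  have h := strictConcaveOn_sin_Icc.secant_strict_mono (a := 0) ⟨le_rfl, pi_pos.le⟩
    (Set.Ioc_subset_Icc_self hx) (Set.Ioc_subset_Icc_self hy) hx.1.ne' hy.1.ne' hxy
  simpa only [sin_zero, sub_zero] using h

/-- For every `β ∈ (0, π/2)` one has `(π − β)·sin(πβ/(π − β)) < π·sin β`;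
equivalently, the contraction constant
`μ(β) = ((π − β) sin(πβ/(π − β)))/(π sin β)` satisfies `0 < μ(β) < 1`. -/
theorem contraction_constant_lt_one (β : ℝ) (hβ : β ∈ Set.Ioo 0 (π / 2)) :
    (π - β) * Real.sin (π * β / (π - β)) < π * Real.sin β ∧
    0 < ((π - β) * Real.sin (π * β / (π - β))) / (π * Real.sin β) ∧
    ((π - β) * Real.sin (π * β / (π - β))) / (π * Real.sin β) < 1 := by
  obtain ⟨hβ0, hβπ⟩ := hβ
  have hπβ : 0 < π - β := by linarith
  set t := π * β / (π - β) with ht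
  have hβt : β < t := by rw [ht, lt_div_iff₀ hπβ]; nlinarith
  have htπ : t < π := by rw [ht, div_lt_iff₀ hπβ]; nlinarith
  have ht0 : 0 < t := hβ0.trans hβt
  have hsin_t : 0 < sin t := sin_pos_of_pos_of_lt_pi ht0 htπ
  have hsin_β : 0 < sin β := sin_pos_of_pos_of_lt_pi hβ0 (by linarith)
  have hdecr : sin t / t < sin β / β :=
    strictAntiOn_sin_div_self ⟨hβ0, by linarith⟩ ⟨ht0, htπ.le⟩ hβt
  have hlt : (π - β) * sin t < π * sin β :=
    calc (π - β) * sin t = π * β * (sin t / t) := by rw [ht]; field_simp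
      _ < π * β * (sin β / β) := by gcongr
      _ = π * sin β := by field_simp
  have hden : 0 < π * sin β := mul_pos pi_pos hsin_β
  exact ⟨hlt, div_pos (mul_pos hπβ hsin_t) hden, (div_lt_one hden).2 hlt⟩
end
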